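/- If r is a maximal positive solution of r r'' = r² + 2(r')² + r²(r² + (r')²) on (a,b), then r(θ) → ∞ as θ → a⁺ and as θ → b⁻. -/

import Mathlib

/-!
Along a solution, `(r'² + r²) e^{-r²} / r⁴` is constant, so `r'² + r² = C r⁴ e^{r²}`; in
particular `1 ≤ C r² e^{r²}`, which keeps `r` away from `0`. Since `r'' > 0`, `r'` is increasing
and `r` is eventually monotone near `b`. If `r` does not tend to `∞` at `b`, it therefore has a
limit `L > 0`, the first integral bounds `r'` near `b`, and `r'` has a limit `l` as well. The
first-order system `(r, r')' = (r', r''(r, r'))` is `C¹` near `(L, l)`, so a local solution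
starting from `(L, l)` at `b` glues with `r` to a solution on a longer interval, contradicting
maximality. The endpoint `a` follows by the reflection `θ ↦ -θ`.
-/

/-- `r` (with derivatives `r'`, `r''`) is a positive solution of the ODE
`r r'' = r² + 2 r'² + r² (r² + r'²)` on the open interval `(a,b)`. -/
def SolOn (r r' r'' : ℝ → ℝ) (a b : ℝ) : Prop :=
  ∀ θ ∈ Set.Ioo a b, 0 < r θ ∧ HasDerivAt r (r' θ) θ ∧ HasDerivAt r' (r'' θ) θ ∧
    r θ * r'' θ = (r θ)^2 + 2 * (r' θ)^2 + (r θ)^2 * ((r θ)^2 + (r' θ)^2)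

/-- The solution on `(a,b)` is maximal: it admits no extension to a strictly
larger open interval. -/
def MaximalSolOn (r r' r'' : ℝ → ℝ) (a b : ℝ) : Prop :=
  SolOn r r' r'' a b ∧
    ∀ (a' b' : ℝ) (ρ ρ' ρ'' : ℝ → ℝ), a' ≤ a → b ≤ b' →
      (∀ θ ∈ Set.Ioo a b, ρ θ = r θ) → SolOn ρ ρ' ρ'' a' b' → a' = a ∧ b' = b

open Set Filter Topology Real

/-- The equation solved for `r''`. -/
noncomputable def accel (x y : ℝ) : ℝ := x + 2 * y ^ 2 / x + x ^ 3 + x * y ^ 2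

noncomputable def odeField (p : ℝ × ℝ) : ℝ × ℝ := (p.2, accel p.1 p.2)

noncomputable def firstIntegral (x y : ℝ) : ℝ := (y ^ 2 + x ^ 2) * exp (-x ^ 2) / x ^ 4

lemma mul_accel {x : ℝ} (y : ℝ) (hx : x ≠ 0) :
    x * accel x y = x ^ 2 + 2 * y ^ 2 + x ^ 2 * (x ^ 2 + y ^ 2) := by
  unfold accel
  field_simp
  ring

lemma contDiffAt_odeField {p : ℝ × ℝ} (hp : p.1 ≠ 0) : ContDiffAt ℝ 1 odeField p := by
  unfold odeField accel
  fun_prop (disch := assumption)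

lemma MonotoneOn.exists_tendsto_nhdsLT_of_not_tendsto_atTop {α β : Type*} [LinearOrder α]
    [TopologicalSpace α] [OrderTopology α] [DenselyOrdered α] [ConditionallyCompleteLinearOrder β]
    [TopologicalSpace β] [OrderTopology β] {f : α → β} {c b : α}
    (hf : MonotoneOn f (Ioo c b)) (hcb : c < b) (h : ¬Tendsto f (𝓝[<] b) atTop) :
    ∃ L, Tendsto f (𝓝[<] b) (𝓝 L) := by
  refine ⟨_, hf.tendsto_nhdsWithin_Ioo_left (nonempty_Ioo.2 hcb) (not_not.1 fun hbdd => h ?_)⟩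
  refine tendsto_atTop.2 fun M => ?_
  obtain ⟨_, ⟨θ, hθ, rfl⟩, hM⟩ := not_bddAbove_iff.1 hbdd M
  filter_upwards [Ioo_mem_nhdsLT hθ.2] with t ht
  exact hM.le.trans (hf hθ ⟨hθ.1.trans ht.1, ht.2⟩ ht.1.le)

lemma monotoneOn_Ioo_of_hasDerivAt_nonneg {f f' : ℝ → ℝ} {c d : ℝ}
    (hf : ∀ x ∈ Ioo c d, HasDerivAt f (f' x) x) (hf' : ∀ x ∈ Ioo c d, 0 ≤ f' x) :
    MonotoneOn f (Ioo c d) :=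
  monotoneOn_of_hasDerivWithinAt_nonneg (convex_Ioo c d)
    (fun x hx => (hf x hx).continuousAt.continuousWithinAt)
    (fun x hx => by rw [interior_Ioo] at hx ⊢; exact (hf x hx).hasDerivWithinAt)
    (fun x hx => by rw [interior_Ioo] at hx; exact hf' x hx)

lemma antitoneOn_Ioo_of_hasDerivAt_nonpos {f f' : ℝ → ℝ} {c d : ℝ}
    (hf : ∀ x ∈ Ioo c d, HasDerivAt f (f' x) x) (hf' : ∀ x ∈ Ioo c d, f' x ≤ 0) :
    AntitoneOn f (Ioo c d) :=
  antitoneOn_of_hasDerivWithinAt_nonpos (convex_Ioo c d)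
    (fun x hx => (hf x hx).continuousAt.continuousWithinAt)
    (fun x hx => by rw [interior_Ioo] at hx ⊢; exact (hf x hx).hasDerivWithinAt)
    (fun x hx => by rw [interior_Ioo] at hx; exact hf' x hx)

/-- No uniqueness theorem is needed: both one-sided derivatives at `b` equal `F (σ b)`. -/
theorem hasDerivAt_ite_lt_of_tendsto {E : Type*} [NormedAddCommGroup E] [NormedSpace ℝ E]
    {F : E → E} {u σ : ℝ → E} {c b d : ℝ} (hcb : c < b)
    (hu : ∀ t ∈ Ioo c b, HasDerivAt u (F (u t)) t) (hlim : Tendsto u (𝓝[<] b) (𝓝 (σ b)))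
    (hF : ContinuousAt F (σ b)) (hσ : ∀ t ∈ Ico b d, HasDerivAt σ (F (σ t)) t) :
    ∀ t ∈ Ioo c d, HasDerivAt (fun s => if s < b then u s else σ s)
      (F (if t < b then u t else σ t)) t := by
  set w : ℝ → E := fun s => if s < b then u s else σ s
  have hw_left : ∀ t ∈ Ioo c b, HasDerivAt w (F (u t)) t := fun t ht =>
    (hu t ht).congr_of_eventuallyEq (eventually_of_mem (Iio_mem_nhds ht.2) fun s hs => if_pos hs)
  intro t ht
  rcases lt_trichotomy t b with htb | rfl | htb
  · rw [if_pos htb]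
    exact hw_left t ⟨ht.1, htb⟩
  · have hleft : HasDerivWithinAt w (F (σ t)) (Iic t) t := by
      have hwu : w =ᶠ[𝓝[<] t] u := eventually_of_mem self_mem_nhdsWithin fun s hs => if_pos hs
      refine hasDerivWithinAt_Iic_of_tendsto_deriv (s := Ioo c t)
        (fun s hs => (hw_left s hs).differentiableAt.differentiableWithinAt) ?_
        (Ioo_mem_nhdsLT hcb) ?_
      · rw [ContinuousWithinAt, show w t = σ t from if_neg (lt_irrefl t)]
        exact (hlim.congr' hwu.symm).mono_left (nhdsWithin_mono _ Ioo_subset_Iio_self)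
      · refine (hF.tendsto.comp hlim).congr' ?_
        filter_upwards [Ioo_mem_nhdsLT hcb] with s hs
        exact (hw_left s hs).deriv.symm
    have hright : HasDerivWithinAt w (F (σ t)) (Ici t) t :=
      (hσ t ⟨le_rfl, ht.2⟩).hasDerivWithinAt.congr (fun s hs => if_neg (not_lt.2 hs))
        (if_neg (lt_irrefl t))
    rw [if_neg (lt_irrefl t), ← hasDerivWithinAt_univ, ← Iic_union_Ici]
    exact hleft.union hright
  · rw [if_neg htb.not_gt]
    exact (hσ t ⟨htb.le, ht.2⟩).congr_of_eventuallyEq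
      (eventually_of_mem (Ioi_mem_nhds htb) fun s hs => if_neg (not_lt.2 (le_of_lt hs)))

lemma solOn_of_hasDerivAt_odeField {u : ℝ → ℝ × ℝ} {a b : ℝ}
    (hu : ∀ t ∈ Ioo a b, 0 < (u t).1 ∧ HasDerivAt u (odeField (u t)) t) :
    SolOn (fun t => (u t).1) (fun t => (u t).2) (fun t => accel (u t).1 (u t).2) a b := by
  intro t ht
  obtain ⟨hpos, hu'⟩ := hu t ht
  exact ⟨hpos, (ContinuousLinearMap.fst ℝ ℝ ℝ).hasFDerivAt.comp_hasDerivAt t hu',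
    (ContinuousLinearMap.snd ℝ ℝ ℝ).hasFDerivAt.comp_hasDerivAt t hu',
    mul_accel _ hpos.ne'⟩

namespace SolOn

variable {r r' r'' : ℝ → ℝ} {a b : ℝ}

lemma eq_accel (hsol : SolOn r r' r'' a b) {θ : ℝ} (hθ : θ ∈ Ioo a b) :
    r'' θ = accel (r θ) (r' θ) := by
  obtain ⟨hpos, -, -, hode⟩ := hsol θ hθ
  exact mul_left_cancel₀ hpos.ne' (hode.trans (mul_accel _ hpos.ne').symm)

lemma second_deriv_pos (hsol : SolOn r r' r'' a b) {θ : ℝ} (hθ : θ ∈ Ioo a b) : 0 < r'' θ := by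
  obtain ⟨hpos, -, -, hode⟩ := hsol θ hθ
  exact pos_of_mul_pos_right (by rw [hode]; positivity) hpos.le

lemma hasDerivAt_prodMk (hsol : SolOn r r' r'' a b) {θ : ℝ} (hθ : θ ∈ Ioo a b) :
    HasDerivAt (fun t => (r t, r' t)) (odeField (r θ, r' θ)) θ := by
  obtain ⟨-, hr, hr', -⟩ := hsol θ hθ
  rw [odeField, ← hsol.eq_accel hθ]
  exact hr.prodMk hr'

lemma hasDerivAt_firstIntegral (hsol : SolOn r r' r'' a b) {θ : ℝ} (hθ : θ ∈ Ioo a b) :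
    HasDerivAt (fun t => firstIntegral (r t) (r' t)) 0 θ := by
  obtain ⟨hpos, hr, hr', hode⟩ := hsol θ hθ
  have h := (((hr'.fun_pow 2).fun_add (hr.fun_pow 2)).fun_mul (hr.fun_pow 2).fun_neg.exp).fun_div
    (hr.fun_pow 4) (by positivity)
  refine h.congr_deriv (div_eq_zero_iff.2 (Or.inl ?_))
  push_cast
  linear_combination (2 * r' θ * r θ ^ 3 * exp (-r θ ^ 2)) * hode

lemma exists_firstIntegral_eq (hsol : SolOn r r' r'' a b) :
    ∃ C, ∀ θ ∈ Ioo a b, r' θ ^ 2 + r θ ^ 2 = C * r θ ^ 4 * exp (r θ ^ 2) := by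
  obtain ⟨C, hC⟩ := isOpen_Ioo.exists_is_const_of_deriv_eq_zero isPreconnected_Ioo
    (fun _ hθ => (hsol.hasDerivAt_firstIntegral hθ).differentiableAt.differentiableWithinAt)
    (fun _ hθ => (hsol.hasDerivAt_firstIntegral hθ).deriv)
  refine ⟨C, fun θ hθ => ?_⟩
  have hpos := (hsol θ hθ).1
  rw [← hC θ hθ, firstIntegral, exp_neg]
  field_simp

lemma monotoneOn_deriv (hsol : SolOn r r' r'' a b) : MonotoneOn r' (Ioo a b) :=
  monotoneOn_Ioo_of_hasDerivAt_nonneg (fun θ hθ => (hsol θ hθ).2.2.1)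
    (fun _ hθ => (hsol.second_deriv_pos hθ).le)

lemma exists_tendsto_nhdsLT (hsol : SolOn r r' r'' a b) (hab : a < b)
    (hr : ¬Tendsto r (𝓝[<] b) atTop) : ∃ L, Tendsto r (𝓝[<] b) (𝓝 L) := by
  by_cases h : ∃ c ∈ Ioo a b, 0 ≤ r' c
  · obtain ⟨c, hc, hc'⟩ := h
    have hsub : Ioo c b ⊆ Ioo a b := Ioo_subset_Ioo_left hc.1.le
    have hmono : MonotoneOn r (Ioo c b) := monotoneOn_Ioo_of_hasDerivAt_nonneg
      (fun θ hθ => (hsol θ (hsub hθ)).2.1)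
      (fun θ hθ => hc'.trans (hsol.monotoneOn_deriv hc (hsub hθ) hθ.1.le))
    exact hmono.exists_tendsto_nhdsLT_of_not_tendsto_atTop hc.2 hr
  · push Not at h
    have hanti : AntitoneOn r (Ioo a b) :=
      antitoneOn_Ioo_of_hasDerivAt_nonpos (fun θ hθ => (hsol θ hθ).2.1) (fun θ hθ => (h θ hθ).le)
    exact ⟨_, hanti.tendsto_nhdsWithin_Ioo_left (nonempty_Ioo.2 hab)
      ⟨0, forall_mem_image.2 fun θ hθ => (hsol θ hθ).1.le⟩⟩

lemma pos_of_tendsto_nhdsLT (hsol : SolOn r r' r'' a b) (hab : a < b) {L : ℝ}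
    (hr : Tendsto r (𝓝[<] b) (𝓝 L)) : 0 < L := by
  obtain ⟨C, hC⟩ := hsol.exists_firstIntegral_eq
  have hL : 0 ≤ L := ge_of_tendsto hr (eventually_of_mem (Ioo_mem_nhdsLT hab) fun θ hθ =>
    (hsol θ hθ).1.le)
  refine hL.lt_of_ne' fun hL0 => ?_
  have hlim : Tendsto (fun θ => C * r θ ^ 2 * exp (r θ ^ 2)) (𝓝[<] b) (𝓝 0) := by
    simpa [hL0] using (tendsto_const_nhds.mul (hr.pow 2)).mul (hr.pow 2).rexp
  have hone : ∀ᶠ θ in 𝓝[<] b, 1 ≤ C * r θ ^ 2 * exp (r θ ^ 2) := by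
    filter_upwards [Ioo_mem_nhdsLT hab] with θ hθ
    have hr2 : 0 < r θ ^ 2 := pow_pos (hsol θ hθ).1 2
    nlinarith [hC θ hθ, sq_nonneg (r' θ)]
  linarith [ge_of_tendsto hlim hone]

lemma exists_tendsto_deriv_nhdsLT (hsol : SolOn r r' r'' a b) (hab : a < b) {L : ℝ}
    (hr : Tendsto r (𝓝[<] b) (𝓝 L)) : ∃ l, Tendsto r' (𝓝[<] b) (𝓝 l) := by
  obtain ⟨C, hC⟩ := hsol.exists_firstIntegral_eq
  refine hsol.monotoneOn_deriv.exists_tendsto_nhdsLT_of_not_tendsto_atTop hab fun htop => ?_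
  have hlim : Tendsto (fun θ => C * r θ ^ 4 * exp (r θ ^ 2)) (𝓝[<] b)
      (𝓝 (C * L ^ 4 * exp (L ^ 2))) :=
    (tendsto_const_nhds.mul (hr.pow 4)).mul (hr.pow 2).rexp
  have hmem : ∀ᶠ θ in 𝓝[<] b, θ ∈ Ioo a b := Ioo_mem_nhdsLT hab
  obtain ⟨θ, hθ, hbound, hlarge⟩ := (hmem.and <|
    (hlim.eventually (gt_mem_nhds (lt_add_one _))).and <|
    ((tendsto_pow_atTop two_ne_zero).comp htop).eventually_gt_atTop
      (C * L ^ 4 * exp (L ^ 2) + 1)).exists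
  simp only [Function.comp_apply] at hlarge
  nlinarith [hC θ hθ, sq_nonneg (r θ)]

lemma exists_extension_right (hsol : SolOn r r' r'' a b) (hab : a < b) {L l : ℝ} (hL : 0 < L)
    (hr : Tendsto r (𝓝[<] b) (𝓝 L)) (hr' : Tendsto r' (𝓝[<] b) (𝓝 l)) :
    ∃ d > b, ∃ ρ ρ' ρ'' : ℝ → ℝ, (∀ θ ∈ Ioo a b, ρ θ = r θ) ∧ SolOn ρ ρ' ρ'' a d := by
  have hF : ContDiffAt ℝ 1 odeField (L, l) := contDiffAt_odeField hL.ne'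
  obtain ⟨σ, hσb, ε, hε, hσ⟩ :=
    hF.exists_forall_mem_closedBall_exists_eq_forall_mem_Ioo_hasDerivAt₀ b
  have hbε : b ∈ Ioo (b - ε) (b + ε) := ⟨by linarith, by linarith⟩
  have hgood : ∀ᶠ t in 𝓝 b, 0 < (σ t).1 ∧ HasDerivAt σ (odeField (σ t)) t := by
    have hσ₁ : ContinuousAt (fun t => (σ t).1) b := (hσ b hbε).continuousAt.fst
    filter_upwards [hσ₁.eventually (lt_mem_nhds (show 0 < (σ b).1 by rwa [hσb])),
      Ioo_mem_nhds hbε.1 hbε.2] with t h₁ h₂ using ⟨h₁, hσ t h₂⟩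
  obtain ⟨d, hbd, hd⟩ := exists_Ico_subset_of_mem_nhds hgood ⟨b + 1, lt_add_one b⟩
  set w : ℝ → ℝ × ℝ := fun t => if t < b then (r t, r' t) else σ t
  have hw_deriv : ∀ t ∈ Ioo a d, HasDerivAt w (odeField (w t)) t :=
    hasDerivAt_ite_lt_of_tendsto hab (fun t ht => hsol.hasDerivAt_prodMk ht)
      (hσb ▸ hr.prodMk_nhds hr') (hσb ▸ hF.continuousAt) (fun t ht => (hd ht).2)
  have hw_pos : ∀ t ∈ Ioo a d, 0 < (w t).1 := by
    intro t ht
    by_cases htb : t < b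
    · simpa [w, htb] using (hsol t ⟨ht.1, htb⟩).1
    · simpa [w, htb] using (hd ⟨not_lt.1 htb, ht.2⟩).1
  exact ⟨d, hbd, _, _, _, fun θ hθ => by simp [w, hθ.2],
    solOn_of_hasDerivAt_odeField fun t ht => ⟨hw_pos t ht, hw_deriv t ht⟩⟩

lemma comp_neg (hsol : SolOn r r' r'' a b) :
    SolOn (fun θ => r (-θ)) (fun θ => -r' (-θ)) (fun θ => r'' (-θ)) (-b) (-a) := by
  intro θ hθ
  obtain ⟨hpos, hr, hr', hode⟩ := hsol (-θ) ⟨by linarith [hθ.2], by linarith [hθ.1]⟩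
  refine ⟨hpos, ?_, ?_, by linear_combination hode⟩
  · exact (hr.comp θ (hasDerivAt_neg θ)).congr_deriv (by ring)
  · exact (hr'.comp θ (hasDerivAt_neg θ)).neg.congr_deriv (by ring)

end SolOn

lemma MaximalSolOn.comp_neg {r r' r'' : ℝ → ℝ} {a b : ℝ} (hmax : MaximalSolOn r r' r'' a b) :
    MaximalSolOn (fun θ => r (-θ)) (fun θ => -r' (-θ)) (fun θ => r'' (-θ)) (-b) (-a) := by
  obtain ⟨hsol, hext⟩ := hmax
  refine ⟨hsol.comp_neg, fun a' b' ρ ρ' ρ'' ha' hb' hρ hsolρ => ?_⟩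
  have hρ' : ∀ θ ∈ Ioo a b, ρ (-θ) = r θ := fun θ hθ => by
    simpa using hρ (-θ) ⟨by linarith [hθ.2], by linarith [hθ.1]⟩
  obtain ⟨h₁, h₂⟩ := hext (-b') (-a') (fun θ => ρ (-θ)) _ _ (by linarith) (by linarith) hρ'
    hsolρ.comp_neg
  constructor <;> linarith

lemma MaximalSolOn.tendsto_atTop_nhdsLT {r r' r'' : ℝ → ℝ} {a b : ℝ}
    (hmax : MaximalSolOn r r' r'' a b) (hab : a < b) : Tendsto r (𝓝[<] b) atTop := by
  obtain ⟨hsol, hext⟩ := hmax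
  by_contra hr
  obtain ⟨L, hL⟩ := hsol.exists_tendsto_nhdsLT hab hr
  obtain ⟨l, hl⟩ := hsol.exists_tendsto_deriv_nhdsLT hab hL
  obtain ⟨d, hbd, ρ, ρ', ρ'', hρ, hsolρ⟩ :=
    hsol.exists_extension_right hab (hsol.pos_of_tendsto_nhdsLT hab hL) hL hl
  exact hbd.ne' (hext a d ρ ρ' ρ'' le_rfl hbd.le hρ hsolρ).2

/-- A maximal positive solution of `r r'' = r² + 2 r'² + r² (r² + r'²)` on `(a,b)`
tends to `+∞` at both endpoints. -/
theorem stmt11 (a b : ℝ) (hab : a < b) (r r' r'' : ℝ → ℝ)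
    (hmax : MaximalSolOn r r' r'' a b) :
    Filter.Tendsto r (nhdsWithin a (Set.Ioi a)) Filter.atTop ∧
      Filter.Tendsto r (nhdsWithin b (Set.Iio b)) Filter.atTop := by
  refine ⟨?_, hmax.tendsto_atTop_nhdsLT hab⟩
  have h := (hmax.comp_neg.tendsto_atTop_nhdsLT (neg_lt_neg hab)).comp tendsto_neg_nhdsGT_neg
  simpa [Function.comp_def] using h
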